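/- Let σ be a finite nonnegative measure with infinite support contained in [-1,α] ∪ [β,1] where α < 0 < β, and let P̂_j be the monic orthogonal polynomials with respect to σ. If neither 0 nor any point of a fixed closed interval [-δ, δ] ⊂ (α, β) contains zeros of P̂_{j_k} for a subsequence (j_k), then the sequence (P̂_{j_k+1}(0)/P̂_{j_k}(0))_k is bounded. -/

import Mathlib

/-!
Write `L Q = ∫ Q dσ`. Since `σ` lives on `[-1, 1]`, the three-term recurrence
`P̂_{j+1} = (X - a_j) P̂_j - b_{j-1}² P̂_{j-1}` has `|a_j| ≤ 1` and `0 ≤ b_{j-1}² ≤ 1`.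
The zeros of `P̂_j` are real and simple, and `P̂_{j-1} / P̂_j = ∑_z c_z / (X - z)` over them
with weights `c_z > 0` summing to `1`. So if every zero of `P̂_j` has `|z| ≥ δ`, then
`δ |P̂_{j-1}(0)| ≤ |P̂_j(0)|`, and the recurrence at `0` gives
`|P̂_{j+1}(0)| ≤ (1 + δ⁻¹) |P̂_j(0)|`.
-/

open MeasureTheory Polynomial Set Finset Lagrange

lemma Polynomial.Monic.eval_pos_of_roots_eq_zero {q : ℝ[X]} (hq : q.Monic) (hroots : q.roots = 0)
    (x : ℝ) : 0 < q.eval x := by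
  obtain ⟨y, hy⟩ : ∃ y, 0 < q.eval y := by
    by_cases hd : q.natDegree = 0
    · exact ⟨0, by simp [eq_one_of_monic_natDegree_zero hq hd]⟩
    · refine (tendsto_atTop_of_leadingCoeff_nonneg q ?_ (by simp [hq.leadingCoeff])
        |>.eventually_gt_atTop 0).exists
      rw [degree_eq_natDegree hq.ne_zero]
      exact_mod_cast Nat.pos_of_ne_zero hd
  by_contra hx
  obtain ⟨z, hz⟩ := intermediate_value_univ x y q.continuous ⟨not_lt.1 hx, hy.le⟩
  simpa [hroots] using (mem_roots hq.ne_zero).2 hz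

noncomputable def oddRoots (p : ℝ[X]) : Finset ℝ :=
  {c ∈ p.roots.toFinset | Odd (p.roots.count c)}

lemma Polynomial.Monic.eval_mul_nodal_oddRoots_nonneg {p : ℝ[X]} (hp : p.Monic) (x : ℝ) :
    0 ≤ (p * nodal (oddRoots p) id).eval x := by
  obtain ⟨q, hpq, -, hq⟩ := exists_prod_multiset_X_sub_C_mul p
  have hqm : q.Monic :=
    (monic_multiset_prod_of_monic _ _ fun c _ => monic_X_sub_C c).of_mul_monic_left (hpq ▸ hp)
  set T := p.roots
  have hp_eval : p.eval x = (∏ c ∈ T.toFinset, (x - c) ^ T.count c) * q.eval x := by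
    conv_lhs => rw [← hpq]
    rw [eval_mul, eval_multiset_prod, Multiset.map_map, Finset.prod_multiset_map_count]
    simp
  have hodd_eval : (nodal (oddRoots p) id).eval x =
      ∏ c ∈ T.toFinset, if Odd (T.count c) then x - c else 1 := by
    rw [eval_nodal, oddRoots, Finset.prod_filter]
    rfl
  rw [eval_mul, hp_eval, hodd_eval, mul_right_comm, ← Finset.prod_mul_distrib]
  refine mul_nonneg (Finset.prod_nonneg fun c _ => ?_) (hqm.eval_pos_of_roots_eq_zero hq x).le
  split_ifs with h
  · rw [← pow_succ]
    exact h.add_one.pow_nonneg _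
  · rw [mul_one]
    exact (Nat.not_odd_iff_even.1 h).pow_nonneg _

def IsPositiveOnIcc (L : ℝ[X] →ₗ[ℝ] ℝ) : Prop :=
  ∀ Q : ℝ[X], Q ≠ 0 → (∀ x ∈ Icc (-1 : ℝ) 1, 0 ≤ Q.eval x) → 0 < L Q

namespace IsPositiveOnIcc

variable {L : ℝ[X] →ₗ[ℝ] ℝ} (hL : IsPositiveOnIcc L)
include hL

lemma nonneg {Q : ℝ[X]} (hQ : ∀ x ∈ Icc (-1 : ℝ) 1, 0 ≤ Q.eval x) : 0 ≤ L Q := by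
  rcases eq_or_ne Q 0 with rfl | hQ0
  · rw [map_zero]
  · exact (hL Q hQ0 hQ).le

lemma map_sq_pos {Q : ℝ[X]} (hQ : Q ≠ 0) : 0 < L (Q ^ 2) :=
  hL _ (pow_ne_zero 2 hQ) fun x _ => by rw [eval_pow]; positivity

lemma abs_map_X_mul_sq_le (Q : ℝ[X]) : |L (X * Q ^ 2)| ≤ L (Q ^ 2) := by
  have h₁ := hL.nonneg (Q := (1 - X) * Q ^ 2) fun x hx => by
    simpa using mul_nonneg (sub_nonneg.2 hx.2) (sq_nonneg (Q.eval x))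
  have h₂ := hL.nonneg (Q := (1 + X) * Q ^ 2) fun x hx => by
    simpa using mul_nonneg (neg_le_iff_add_nonneg'.1 hx.1) (sq_nonneg (Q.eval x))
  rw [sub_mul, one_mul, map_sub] at h₁
  rw [add_mul, one_mul, map_add] at h₂
  exact abs_le.2 ⟨by linarith, by linarith⟩

lemma map_X_mul_sq_le (Q : ℝ[X]) : L ((X * Q) ^ 2) ≤ L (Q ^ 2) := by
  have h := hL.nonneg (Q := (1 - X ^ 2) * Q ^ 2) fun x hx => by
    have : x ^ 2 ≤ 1 := by nlinarith [hx.1, hx.2]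
    simpa using mul_nonneg (sub_nonneg.2 this) (sq_nonneg (Q.eval x))
  rw [sub_mul, one_mul, map_sub, ← mul_pow] at h
  linarith

end IsPositiveOnIcc

structure IsMonicOrthogonal (L : ℝ[X] →ₗ[ℝ] ℝ) (P : ℕ → ℝ[X]) : Prop where
  isMonicOfDegree : ∀ n, IsMonicOfDegree (P n) n
  map_mul_eq_zero_of_degree_lt : ∀ (n : ℕ) (Q : ℝ[X]), Q.degree < n → L (P n * Q) = 0

/-- `recurrenceA L P j` and `recurrenceB L P j` are the coefficients `a_j` and `b_j²` of the
three-term recurrence. -/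
noncomputable def recurrenceA (L : ℝ[X] →ₗ[ℝ] ℝ) (P : ℕ → ℝ[X]) (n : ℕ) : ℝ :=
  L (X * P n ^ 2) / L (P n ^ 2)

noncomputable def recurrenceB (L : ℝ[X] →ₗ[ℝ] ℝ) (P : ℕ → ℝ[X]) (n : ℕ) : ℝ :=
  L (P (n + 1) ^ 2) / L (P n ^ 2)

namespace IsMonicOrthogonal

variable {L : ℝ[X] →ₗ[ℝ] ℝ} {P : ℕ → ℝ[X]} (hP : IsMonicOrthogonal L P)
include hP

lemma map_mul_of_natDegree_le {n : ℕ} {Q : ℝ[X]} (hQ : Q.natDegree ≤ n) :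
    L (P n * Q) = Q.coeff n * L (P n ^ 2) := by
  have hlt : (Q - C (Q.coeff n) * P n).degree < n := by
    refine (degree_lt_iff_coeff_zero _ _).2 fun m hm => ?_
    rcases hm.eq_or_lt with rfl | hm
    · simp [((isMonicOfDegree_iff _ _).1 (hP.isMonicOfDegree n)).2]
    · have hPm : (P n).coeff m = 0 :=
        coeff_eq_zero_of_natDegree_lt ((hP.isMonicOfDegree n).natDegree_eq.trans_lt hm)
      simp [coeff_eq_zero_of_natDegree_lt (hQ.trans_lt hm), hPm]
  calc L (P n * Q) = L (P n * (Q - C (Q.coeff n) * P n) + Q.coeff n • P n ^ 2) := by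
        rw [smul_eq_C_mul]; ring_nf
    _ = L (P n * (Q - C (Q.coeff n) * P n)) + Q.coeff n * L (P n ^ 2) := by
        rw [map_add, map_smul, smul_eq_mul]
    _ = Q.coeff n * L (P n ^ 2) := by rw [hP.map_mul_eq_zero_of_degree_lt n _ hlt, zero_add]

lemma map_mul_of_isMonicOfDegree {n : ℕ} {Q : ℝ[X]} (hQ : IsMonicOfDegree Q n) :
    L (P n * Q) = L (P n ^ 2) := by
  obtain ⟨hle, hcoeff⟩ := (isMonicOfDegree_iff _ _).1 hQ
  rw [hP.map_mul_of_natDegree_le hle, hcoeff, one_mul]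

lemma map_mul_eq_zero_of_lt {m n : ℕ} (h : m < n) : L (P n * P m) = 0 :=
  hP.map_mul_eq_zero_of_degree_lt n _ <| by
    rw [degree_eq_natDegree (hP.isMonicOfDegree m).ne_zero, (hP.isMonicOfDegree m).natDegree_eq]
    exact_mod_cast h

lemma isMonicOfDegree_X_mul (n : ℕ) : IsMonicOfDegree (X * P n) (n + 1) := by
  simpa [add_comm] using (isMonicOfDegree_X ℝ).mul (hP.isMonicOfDegree n)

variable (hL : IsPositiveOnIcc L)
include hL

lemma map_sq_pos (n : ℕ) : 0 < L (P n ^ 2) :=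
  hL.map_sq_pos (hP.isMonicOfDegree n).ne_zero

lemma map_sq_le_of_isMonicOfDegree {n : ℕ} {Q : ℝ[X]} (hQ : IsMonicOfDegree Q n) :
    L (P n ^ 2) ≤ L (Q ^ 2) := by
  have hcross : L (P n * (Q - P n)) = 0 := by
    rw [mul_sub, map_sub, hP.map_mul_of_isMonicOfDegree hQ, sq, sub_self]
  have hsq : Q ^ 2 = P n ^ 2 + 2 • (P n * (Q - P n)) + (Q - P n) ^ 2 := by ring
  rw [hsq, map_add, map_add, map_nsmul, hcross, smul_zero, add_zero]
  exact le_add_of_nonneg_right (hL.nonneg fun x _ => by rw [eval_pow]; positivity)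

lemma eq_zero_of_forall_map_mul_eq_zero {m : ℕ} {Q : ℝ[X]} (hQ : Q.natDegree ≤ m)
    (h : ∀ k ≤ m, L (P k * Q) = 0) : Q = 0 := by
  by_contra hQ0
  have hk := h _ hQ
  rw [hP.map_mul_of_natDegree_le le_rfl, coeff_natDegree] at hk
  exact mul_ne_zero (leadingCoeff_ne_zero.2 hQ0) (hP.map_sq_pos hL _).ne' hk

lemma abs_recurrenceA_le_one (n : ℕ) : |recurrenceA L P n| ≤ 1 := by
  rw [recurrenceA, abs_div, abs_of_pos (hP.map_sq_pos hL n)]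
  exact div_le_one_of_le₀ (hL.abs_map_X_mul_sq_le _)
    ((abs_nonneg _).trans (hL.abs_map_X_mul_sq_le _))

lemma recurrenceB_nonneg (n : ℕ) : 0 ≤ recurrenceB L P n :=
  div_nonneg (hP.map_sq_pos hL _).le (hP.map_sq_pos hL _).le

lemma recurrenceB_le_one (n : ℕ) : recurrenceB L P n ≤ 1 :=
  div_le_one_of_le₀ ((hP.map_sq_le_of_isMonicOfDegree hL (hP.isMonicOfDegree_X_mul n)).trans
    (hL.map_X_mul_sq_le _)) (hP.map_sq_pos hL n).le

lemma recurrenceA_mul (n : ℕ) : recurrenceA L P n * L (P n ^ 2) = L (X * P n ^ 2) :=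
  div_mul_cancel₀ _ (hP.map_sq_pos hL n).ne'

lemma recurrenceB_mul (n : ℕ) : recurrenceB L P n * L (P n ^ 2) = L (P (n + 1) ^ 2) :=
  div_mul_cancel₀ _ (hP.map_sq_pos hL n).ne'
lemma recurrence_one : P 1 = (X - C (recurrenceA L P 0)) * P 0 := by
  set a := recurrenceA L P 0
  have hE := IsMonicOfDegree.natDegree_sub_lt one_ne_zero
    ((isMonicOfDegree_X_sub_one a).mul (hP.isMonicOfDegree 0)) (hP.isMonicOfDegree 1)
  refine (sub_eq_zero.1 (hP.eq_zero_of_forall_map_mul_eq_zero hL (Nat.le_of_lt_succ hE)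
    fun k hk => ?_)).symm
  obtain rfl := Nat.le_zero.1 hk
  have hexp : P 0 * ((X - C a) * P 0 - P 1) = X * P 0 ^ 2 - a • P 0 ^ 2 - P 1 * P 0 := by
    rw [smul_eq_C_mul]; ring
  rw [hexp, map_sub, map_sub, map_smul, hP.map_mul_eq_zero_of_lt zero_lt_one, smul_eq_mul,
    hP.recurrenceA_mul hL, sub_self, sub_zero]

lemma recurrence_add_two (n : ℕ) :
    P (n + 2) = (X - C (recurrenceA L P (n + 1))) * P (n + 1) - C (recurrenceB L P n) * P n := by
  set a := recurrenceA L P (n + 1)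
  set b := recurrenceB L P n
  have hmon : IsMonicOfDegree ((X - C a) * P (n + 1) - C b * P n) (n + 2) := by
    refine (mul_comm (P (n + 1)) _ ▸
      (hP.isMonicOfDegree (n + 1)).mul (isMonicOfDegree_X_sub_one a)).sub ?_
    exact (natDegree_C_mul_le _ _).trans_lt <| by rw [(hP.isMonicOfDegree n).natDegree_eq]; omega
  have hE := hmon.natDegree_sub_lt (by omega) (hP.isMonicOfDegree (n + 2))
  refine (sub_eq_zero.1 (hP.eq_zero_of_forall_map_mul_eq_zero hL (Nat.le_of_lt_succ hE)
    fun k hk => ?_)).symm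
  have hexp : P k * ((X - C a) * P (n + 1) - C b * P n - P (n + 2)) =
      P (n + 1) * (X * P k) - a • (P (n + 1) * P k) - b • (P k * P n) - P (n + 2) * P k := by
    simp only [smul_eq_C_mul]; ring
  rw [hexp, map_sub, map_sub, map_sub, map_smul, map_smul, smul_eq_mul, smul_eq_mul,
    hP.map_mul_eq_zero_of_lt (by omega : k < n + 2), sub_zero]
  rcases (by omega : k < n ∨ k = n ∨ k = n + 1) with hk | rfl | rfl
  · rw [hP.map_mul_of_natDegree_le ((hP.isMonicOfDegree_X_mul k).natDegree_eq.trans_le (by omega)),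
      coeff_X_mul, coeff_eq_zero_of_natDegree_lt ((hP.isMonicOfDegree k).natDegree_eq.trans_lt hk),
      hP.map_mul_eq_zero_of_lt (by omega : k < n + 1), mul_comm (P k),
      hP.map_mul_eq_zero_of_lt hk]
    ring
  · rw [hP.map_mul_of_isMonicOfDegree (hP.isMonicOfDegree_X_mul k),
      hP.map_mul_eq_zero_of_lt (Nat.lt_succ_self k), ← sq, hP.recurrenceB_mul hL]
    ring
  · rw [hP.map_mul_eq_zero_of_lt (Nat.lt_succ_self n), ← sq,
      show P (n + 1) * (X * P (n + 1)) = X * P (n + 1) ^ 2 by ring, ← hP.recurrenceA_mul hL]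
    ring

/- `P n * nodal (oddRoots (P n)) id` is nonnegative and nonzero, hence not orthogonal to
`nodal (oddRoots (P n)) id`: so `P n` has at least `n` roots of odd multiplicity. -/
lemma card_roots_toFinset (n : ℕ) : (P n).roots.toFinset.card = n := by
  have hle : (P n).roots.toFinset.card ≤ n := (Multiset.toFinset_card_le _).trans
    ((card_roots' _).trans (hP.isMonicOfDegree n).natDegree_eq.le)
  refine le_antisymm hle (not_lt.1 fun hlt => ?_)
  have hW : (nodal (oddRoots (P n)) id).degree < n := by
    rw [degree_nodal]
    exact_mod_cast (Finset.card_le_card (filter_subset _ _)).trans_lt hlt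
  have hpos := hL _ (mul_ne_zero (hP.isMonicOfDegree n).ne_zero nodal_ne_zero) fun x _ =>
    (hP.isMonicOfDegree n).monic.eval_mul_nodal_oddRoots_nonneg x
  rw [hP.map_mul_eq_zero_of_degree_lt n _ hW] at hpos
  exact lt_irrefl _ hpos

lemma eq_nodal_roots (n : ℕ) : P n = nodal (P n).roots.toFinset id := by
  have hmon := hP.isMonicOfDegree n
  have hcard : Multiset.card (P n).roots = (P n).natDegree := le_antisymm (card_roots' _) <|
    hmon.natDegree_eq.trans_le <| (hP.card_roots_toFinset hL n).symm.trans_le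
      (P n).roots.toFinset_card_le
  have hnodup : (P n).roots.Nodup := Multiset.toFinset_card_eq_card_iff_nodup.1 <| by
    rw [hcard, hP.card_roots_toFinset hL, hmon.natDegree_eq]
  rw [nodal, Finset.prod_eq_multiset_prod, Multiset.toFinset_val, hnodup.dedup]
  exact (prod_multiset_X_sub_C_of_monic_of_roots_card_eq hmon.monic hcard).symm

/- With `N z = P (n + 1) / (X - z)`, the weights are positive by Gauss quadrature,
`c z * L (N z ^ 2) = L (P n * N z) = L (P n ^ 2)`, and sum to `1` by comparing leading
coefficients. -/
lemma exists_convex_combination_nodal_erase (n : ℕ) :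
    ∃ c : ℝ → ℝ, (∀ z ∈ (P (n + 1)).roots.toFinset, 0 < c z) ∧
      ∑ z ∈ (P (n + 1)).roots.toFinset, c z = 1 ∧
      P n = ∑ z ∈ (P (n + 1)).roots.toFinset,
        C (c z) * nodal ((P (n + 1)).roots.toFinset.erase z) id := by
  have hnodal := hP.eq_nodal_roots hL (n + 1)
  have hS := hP.card_roots_toFinset hL (n + 1)
  set S := (P (n + 1)).roots.toFinset
  have hN : ∀ z ∈ S, IsMonicOfDegree (nodal (S.erase z) id) n := fun z hz =>
    ⟨by rw [natDegree_nodal, card_erase_of_mem hz, hS]; rfl, nodal_monic⟩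
  set c : ℝ → ℝ := fun z => (P n).eval z * nodalWeight S id z
  have hinterp : P n = ∑ z ∈ S, C (c z) * nodal (S.erase z) id := by
    have hdeg : (P n).degree < S.card := by
      rw [hS, degree_eq_natDegree (hP.isMonicOfDegree n).ne_zero,
        (hP.isMonicOfDegree n).natDegree_eq]
      exact_mod_cast n.lt_succ_self
    conv_lhs => rw [eq_interpolate (s := S) (v := id) (Set.injOn_id _) hdeg, interpolate_apply]
    refine sum_congr rfl fun z hz => ?_
    rw [basis_eq_prod_sub_inv_mul_nodal_div hz, ← nodal_erase_eq_nodal_div hz, C_mul, mul_assoc]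
    rfl
  have hcross : ∀ z ∈ S, ∀ w ∈ S, w ≠ z →
      L (nodal (S.erase w) id * nodal (S.erase z) id) = 0 := by
    intro z hz w hw hwz
    have hzw : z ∈ S.erase w := mem_erase.2 ⟨hwz.symm, hz⟩
    have hfactor : nodal (S.erase w) id * nodal (S.erase z) id =
        P (n + 1) * nodal ((S.erase w).erase z) id := by
      rw [nodal_eq_mul_nodal_erase hzw, hnodal, nodal_eq_mul_nodal_erase hz]
      simp only [id]
      ring
    rw [hfactor]
    refine hP.map_mul_eq_zero_of_degree_lt _ _ ?_
    rw [degree_nodal, card_erase_of_mem hzw, card_erase_of_mem hw, hS]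
    exact_mod_cast (by omega : n + 1 - 1 - 1 < n + 1)
  have hpair : ∀ z ∈ S, c z * L (nodal (S.erase z) id ^ 2) = L (P n ^ 2) := by
    intro z hz
    rw [← hP.map_mul_of_isMonicOfDegree (hN z hz)]
    conv_rhs => rw [hinterp]
    rw [sum_mul, map_sum, sum_eq_single z]
    · rw [mul_assoc (C (c z)), ← smul_eq_C_mul, map_smul, smul_eq_mul, sq]
    · intro w hw hwz
      rw [mul_assoc (C (c w)), ← smul_eq_C_mul, map_smul, hcross z hz w hw hwz, smul_zero]
    · exact fun h => absurd hz h
  refine ⟨c, fun z hz => ?_, ?_, hinterp⟩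
  · refine pos_of_mul_pos_left ?_ (hL.map_sq_pos (hN z hz).ne_zero).le
    rw [hpair z hz]
    exact hP.map_sq_pos hL n
  · have hcoeff := congrArg (coeff · n) hinterp
    simp only [finsetSum_coeff, coeff_C_mul] at hcoeff
    rw [((isMonicOfDegree_iff _ _).1 (hP.isMonicOfDegree n)).2] at hcoeff
    rw [hcoeff]
    exact sum_congr rfl fun z hz => by rw [((isMonicOfDegree_iff _ _).1 (hN z hz)).2, mul_one]

lemma mul_abs_eval_le {δ x : ℝ} (hδ : 0 ≤ δ) (n : ℕ)
    (hroots : ∀ z, (P (n + 1)).IsRoot z → δ ≤ |z - x|) :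
    δ * |(P n).eval x| ≤ |(P (n + 1)).eval x| := by
  obtain ⟨c, hc, hsum, hPn⟩ := hP.exists_convex_combination_nodal_erase hL n
  have hnodal := hP.eq_nodal_roots hL (n + 1)
  set S := (P (n + 1)).roots.toFinset
  have hN : ∀ z ∈ S, δ * |(nodal (S.erase z) id).eval x| ≤ |(P (n + 1)).eval x| := by
    intro z hz
    have hroot : (P (n + 1)).IsRoot z :=
      (mem_roots (hP.isMonicOfDegree _).ne_zero).1 (Multiset.mem_toFinset.1 hz)
    rw [hnodal, nodal_eq_mul_nodal_erase hz, eval_mul, abs_mul]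
    gcongr
    simpa [abs_sub_comm] using hroots z hroot
  calc δ * |(P n).eval x| ≤ δ * ∑ z ∈ S, c z * |(nodal (S.erase z) id).eval x| := by
        gcongr
        rw [hPn, eval_finsetSum]
        refine (abs_sum_le_sum_abs _ _).trans_eq (sum_congr rfl fun z hz => ?_)
        rw [eval_mul, eval_C, abs_mul, abs_of_pos (hc z hz)]
    _ = ∑ z ∈ S, c z * (δ * |(nodal (S.erase z) id).eval x|) := by
        rw [mul_sum]; exact sum_congr rfl fun z _ => by ring
    _ ≤ ∑ z ∈ S, c z * |(P (n + 1)).eval x| :=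
        sum_le_sum fun z hz => mul_le_mul_of_nonneg_left (hN z hz) (hc z hz).le
    _ = |(P (n + 1)).eval x| := by rw [← sum_mul, hsum, one_mul]

lemma abs_eval_succ_le {δ x : ℝ} (hδ : 0 < δ) (n : ℕ)
    (hroots : ∀ z, (P n).IsRoot z → δ ≤ |z - x|) :
    |(P (n + 1)).eval x| ≤ (|x| + 1 + δ⁻¹) * |(P n).eval x| := by
  have hA : ∀ m, |x - recurrenceA L P m| ≤ |x| + 1 := fun m =>
    (abs_sub _ _).trans (add_le_add_right (hP.abs_recurrenceA_le_one hL m) _)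
  cases n with
  | zero =>
    rw [hP.recurrence_one hL, eval_mul, abs_mul]
    gcongr
    simpa using (hA 0).trans (le_add_of_nonneg_right (inv_nonneg.2 hδ.le))
  | succ m =>
    have hstep : |(P m).eval x| ≤ δ⁻¹ * |(P (m + 1)).eval x| :=
      (le_inv_mul_iff₀ hδ).2 (hP.mul_abs_eval_le hL hδ.le m hroots)
    rw [hP.recurrence_add_two hL m]
    simp only [eval_sub, eval_mul, eval_X, eval_C]
    calc |(x - recurrenceA L P (m + 1)) * (P (m + 1)).eval x - recurrenceB L P m * (P m).eval x|
        ≤ |x - recurrenceA L P (m + 1)| * |(P (m + 1)).eval x| +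
          recurrenceB L P m * |(P m).eval x| := by
          refine (abs_sub _ _).trans_eq ?_
          rw [abs_mul, abs_mul, abs_of_nonneg (hP.recurrenceB_nonneg hL m)]
      _ ≤ (|x| + 1) * |(P (m + 1)).eval x| + 1 * (δ⁻¹ * |(P (m + 1)).eval x|) := by
          gcongr
          · exact hA _
          · exact hP.recurrenceB_le_one hL m
      _ = (|x| + 1 + δ⁻¹) * |(P (m + 1)).eval x| := by ring

end IsMonicOrthogonal

lemma integrable_eval_of_ae_mem {σ : Measure ℝ} [IsFiniteMeasure σ] {s : Set ℝ}
    (hs : IsCompact s) (hσ : ∀ᵐ x ∂σ, x ∈ s) (Q : ℝ[X]) : Integrable (fun x => Q.eval x) σ := by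
  obtain ⟨M, hM⟩ := hs.exists_bound_of_continuousOn Q.continuous.continuousOn
  exact .of_bound Q.continuous.aestronglyMeasurable M (hσ.mono hM)

noncomputable def polyIntegral (σ : Measure ℝ) [IsFiniteMeasure σ]
    (hσ : ∀ᵐ x ∂σ, x ∈ Icc (-1 : ℝ) 1) : ℝ[X] →ₗ[ℝ] ℝ where
  toFun Q := ∫ x, Q.eval x ∂σ
  map_add' Q R := by
    simp only [eval_add]
    exact integral_add (integrable_eval_of_ae_mem isCompact_Icc hσ Q)
      (integrable_eval_of_ae_mem isCompact_Icc hσ R)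
  map_smul' c Q := by simp only [eval_smul, smul_eq_mul, integral_const_mul, RingHom.id_apply]

section polyIntegral

variable {σ : Measure ℝ} [IsFiniteMeasure σ] (hσ : ∀ᵐ x ∂σ, x ∈ Icc (-1 : ℝ) 1)

lemma polyIntegral_apply (Q : ℝ[X]) : polyIntegral σ hσ Q = ∫ x, Q.eval x ∂σ := rfl

lemma isPositiveOnIcc_polyIntegral (hinf : ∀ s : Finset ℝ, σ ((↑s : Set ℝ)ᶜ) ≠ 0) :
    IsPositiveOnIcc (polyIntegral σ hσ) := by
  intro Q hQ hnonneg
  rw [polyIntegral_apply, integral_pos_iff_support_of_nonneg_ae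
    (hσ.mono fun x hx => hnonneg x hx) (integrable_eval_of_ae_mem isCompact_Icc hσ Q)]
  refine (pos_iff_ne_zero.2 (hinf Q.roots.toFinset)).trans_le (measure_mono fun x hx => ?_)
  simpa [Function.mem_support, hQ] using hx

lemma isMonicOrthogonal_polyIntegral {P : ℕ → ℝ[X]} (hP : ∀ n, IsMonicOfDegree (P n) n)
    (horth : ∀ j, ∀ i < j, ∫ x, (P j).eval x * x ^ i ∂σ = 0) :
    IsMonicOrthogonal (polyIntegral σ hσ) P := by
  classical
  refine ⟨hP, fun n Q hQ => ?_⟩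
  have hspan :
      degreeLT ℝ n ≤ LinearMap.ker (polyIntegral σ hσ ∘ₗ LinearMap.mulLeft ℝ (P n)) := by
    rw [degreeLT_eq_span_X_pow, Submodule.span_le]
    intro _ hX
    obtain ⟨i, hi, rfl⟩ := Finset.mem_image.1 hX
    simpa [polyIntegral_apply] using horth n i (Finset.mem_range.1 hi)
  exact hspan (mem_degreeLT.2 hQ)

end polyIntegral

theorem ratio_bounded_of_no_zeros_near_zero_general
    (α β : ℝ) (hα : α < 0) (hβ : 0 < β)
    (σ : Measure ℝ) [IsFiniteMeasure σ]
    (hsupp : σ ((Set.Icc (-1) α ∪ Set.Icc β 1)ᶜ) = 0)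
    (hinf : ∀ s : Finset ℝ, σ ((↑s : Set ℝ)ᶜ) ≠ 0)
    (P : ℕ → Polynomial ℝ)
    (hmonic : ∀ j, (P j).Monic) (hdeg : ∀ j, (P j).natDegree = j)
    (horth : ∀ j, ∀ i < j, ∫ x, (P j).eval x * x ^ i ∂σ = 0)
    (δ : ℝ) (hδ : 0 < δ)
    (jk : ℕ → ℕ)
    (hnozero : ∀ n, ∀ x ∈ Set.Icc (-δ) δ, (P (jk n)).eval x ≠ 0) :
    ∃ M : ℝ, ∀ n, |(P (jk n + 1)).eval 0 / (P (jk n)).eval 0| ≤ M := by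
  have hσ : ∀ᵐ x ∂σ, x ∈ Icc (-1 : ℝ) 1 := by
    filter_upwards [measure_eq_zero_iff_ae_notMem.1 hsupp] with x hx
    rcases Set.notMem_compl_iff.1 hx with h | h
    · exact ⟨h.1, h.2.trans (by linarith)⟩
    · exact ⟨by linarith [h.1], h.2⟩
  have hL := isPositiveOnIcc_polyIntegral hσ hinf
  have hP := isMonicOrthogonal_polyIntegral hσ (fun n => ⟨hdeg n, hmonic n⟩) horth
  refine ⟨1 + δ⁻¹, fun n => ?_⟩
  have hroots : ∀ z, (P (jk n)).IsRoot z → δ ≤ |z - 0| := fun z hz => by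
    by_contra h
    exact hnozero n z (abs_le.1 (by simpa using (not_le.1 h).le)) hz
  have h0 : (P (jk n)).eval 0 ≠ 0 := hnozero n 0 ⟨by linarith, hδ.le⟩
  rw [abs_div, div_le_iff₀ (abs_pos.2 h0)]
  simpa using hP.abs_eval_succ_le hL hδ (jk n) hroots

/-- Let `σ` be a finite measure with infinite support contained in
`[-1,α] ∪ [β,1]`, `α < 0 < β`, and `P̂_j` its monic orthogonal polynomials.
If for a subsequence `(j_k)` the polynomials `P̂_{j_k}` have no zeros in a
fixed interval `[-δ,δ] ⊂ (α,β)`, then the sequence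
`(P̂_{j_k+1}(0)/P̂_{j_k}(0))` is bounded. -/
theorem ratio_bounded_of_no_zeros_near_zero
    (α β : ℝ) (hα : α < 0) (hβ : 0 < β)
    (σ : Measure ℝ) [IsFiniteMeasure σ]
    (hsupp : σ ((Set.Icc (-1) α ∪ Set.Icc β 1)ᶜ) = 0)
    (hinf : ∀ s : Finset ℝ, σ ((↑s : Set ℝ)ᶜ) ≠ 0)
    (P : ℕ → Polynomial ℝ)
    (hmonic : ∀ j, (P j).Monic) (hdeg : ∀ j, (P j).natDegree = j)
    (horth : ∀ j, ∀ i < j, ∫ x, (P j).eval x * x ^ i ∂σ = 0)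
    (δ : ℝ) (hδ : 0 < δ) (hδα : α < -δ) (hδβ : δ < β)
    (jk : ℕ → ℕ) (hjk : StrictMono jk)
    (hnozero : ∀ n, ∀ x ∈ Set.Icc (-δ) δ, (P (jk n)).eval x ≠ 0) :
    ∃ M : ℝ, ∀ n, |(P (jk n + 1)).eval 0 / (P (jk n)).eval 0| ≤ M :=
  ratio_bounded_of_no_zeros_near_zero_general α β hα hβ σ hsupp hinf P hmonic hdeg horth δ hδ jk
    hnozero
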